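/- arXiv:2110.10781 — 5 statements merged into one kernel-verified Lean document; each statement's English description precedes it below -/
import Mathlib

section
/- Suppose there exist p ∈ ℝ^n with strictly positive components, P ∈ ℝ^N with strictly positive components, and individual incomes y_i > 0 for i ∈ M ∪ W such that p_{m,w} = p, P_{m,w} = P, and y_{m,w} = y_m + y_w for every (m,w) ∈ M × W, and suppose every observed couple exhausts its budget: p·q_m + P·Q_m = y_m + y_{σ(m)} for every m ∈ M. Then for every feasible specification of D whose Lindahl split is constant across potential pairs (P^1_{m,w} = P̄ for all (m,w), for some fixed P̄ with strictly positive components and P̄ componentwise below P), every cycle of remarriages m_1, …, m_n with m_1 = m_n satisfies Σ_{j=1}^{n−1} a_{m_j, σ(m_{j+1})} = 0. Consequently, under these price and income conditions no dataset D can contain a blocking cycle: path monotonicity can never be violated along a cycle of remarriages for such a specification. -/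
open Finset

noncomputable section

/-- Euclidean dot product of two vectors in `ℝ^k`. -/
def dotp {k : ℕ} (x y : Fin k → ℝ) : ℝ := ∑ j, x j * y j

/-- The nonnegative orthant `ℝ^n_{≥0} × ℝ^N_{≥0}`. -/
def Orthant (n N : ℕ) : Set ((Fin n → ℝ) × (Fin N → ℝ)) := {x | 0 ≤ x.1 ∧ 0 ≤ x.2}

/-- A dataset: prices and incomes for all potential pairs, and aggregate private and
public consumption for all observed couples `(m, σ m)`. -/
structure Dataset (n N : ℕ) (M W : Type) where
  p : M → W → Fin n → ℝ           -- private-good prices for potential pair (m,w)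
  PP : M → W → Fin N → ℝ          -- public-good prices for potential pair (m,w)
  y : M → W → ℝ                   -- income of potential pair (m,w)
  q : M → Fin n → ℝ               -- aggregate private consumption of couple (m, σ m)
  Q : M → Fin N → ℝ               -- public consumption of couple (m, σ m)
  p_pos : ∀ m w j, 0 < p m w j
  PP_pos : ∀ m w J, 0 < PP m w J
  y_pos : ∀ m w, 0 < y m w
  q_nonneg : ∀ m j, 0 ≤ q m j
  Q_nonneg : ∀ m J, 0 ≤ Q m J

/-- A feasible specification of a dataset: private shares for each observed couple and
Lindahl splits of the public-good prices for each potential pair. -/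
structure Spec {n N : ℕ} {M W : Type} (D : Dataset n N M W) where
  q1 : M → Fin n → ℝ              -- man's private share in couple (m, σ m)
  q2 : M → Fin n → ℝ              -- woman σ m's private share in couple (m, σ m)
  P1 : M → W → Fin N → ℝ          -- man's Lindahl price for potential pair (m,w)
  P2 : M → W → Fin N → ℝ          -- woman's Lindahl price for potential pair (m,w)
  q1_nonneg : ∀ m j, 0 ≤ q1 m j
  q2_nonneg : ∀ m j, 0 ≤ q2 m j
  q_add : ∀ m, q1 m + q2 m = D.q m
  P1_pos : ∀ m w J, 0 < P1 m w J
  P2_pos : ∀ m w J, 0 < P2 m w J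
  P_add : ∀ m w, P1 m w + P2 m w = D.PP m w

/-- Edge weight `a_{m,w}` of a feasible specification. -/
def edge {n N : ℕ} {M W : Type} (σ : M ≃ W) (D : Dataset n N M W) (F : Spec D)
    (m : M) (w : W) : ℝ :=
  dotp (D.p m w) (F.q1 m + F.q2 (σ.symm w)) + dotp (F.P1 m w) (D.Q m)
    + dotp (F.P2 m w) (D.Q (σ.symm w)) - D.y m w

/-- `IsRePath len ms`: `ms 0, …, ms (len-1)` is a path of remarriages:
at least two entries, the first `len - 1` entries pairwise distinct, and the last
`len - 1` entries pairwise distinct. -/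
def IsRePath {M : Type} (len : ℕ) (ms : ℕ → M) : Prop :=
  2 ≤ len ∧
  (∀ i j, i < len - 1 → j < len - 1 → ms i = ms j → i = j) ∧
  (∀ i j, 1 ≤ i → i < len → 1 ≤ j → j < len → ms i = ms j → i = j)

/-- A path of remarriages is permissible if it is a cycle or neither endpoint
is a committed man. -/
def PermissiblePath {M : Type} (V : Set M) (len : ℕ) (ms : ℕ → M) : Prop :=
  ms 0 = ms (len - 1) ∨ (ms 0 ∉ V ∧ ms (len - 1) ∉ V)

/-- Path consistency: no permissible path of remarriages has all edge weights ≤ 0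
with at least one strict. -/
def PathConsistent {n N : ℕ} {M W : Type} (σ : M ≃ W) (V : Set M)
    (D : Dataset n N M W) (F : Spec D) : Prop :=
  ¬ ∃ (len : ℕ) (ms : ℕ → M), IsRePath len ms ∧ PermissiblePath V len ms ∧
      (∀ j < len - 1, edge σ D F (ms j) (σ (ms (j + 1))) ≤ 0) ∧
      (∃ j < len - 1, edge σ D F (ms j) (σ (ms (j + 1))) < 0)

/-- Path monotonicity: no permissible path of remarriages has strictly negative
total edge weight. -/
def PathMonotone {n N : ℕ} {M W : Type} (σ : M ≃ W) (V : Set M)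
    (D : Dataset n N M W) (F : Spec D) : Prop :=
  ¬ ∃ (len : ℕ) (ms : ℕ → M), IsRePath len ms ∧ PermissiblePath V len ms ∧
      (∑ j ∈ Finset.range (len - 1), edge σ D F (ms j) (σ (ms (j + 1)))) < 0

/-- A utility profile: a continuous, nondecreasing, concave utility on the
nonnegative orthant for every individual. -/
structure UtilProfile (n N : ℕ) (M W : Type) where
  u : M ⊕ W → ((Fin n → ℝ) × (Fin N → ℝ)) → ℝ
  cont : ∀ i, ContinuousOn (u i) (Orthant n N)
  mono : ∀ i, MonotoneOn (u i) (Orthant n N)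
  conc : ∀ i, ConcaveOn ℝ (Orthant n N) (u i)

/-- The pair `(m,w)` is weakly blocking at disposable income `yhat`. -/
def WeakBlock {n N : ℕ} {M W : Type} (σ : M ≃ W) (D : Dataset n N M W) (F : Spec D)
    (U : UtilProfile n N M W) (m : M) (w : W) (yhat : ℝ) : Prop :=
  ∃ (x1 x2 : Fin n → ℝ) (X : Fin N → ℝ),
    (∀ j, 0 ≤ x1 j) ∧ (∀ j, 0 ≤ x2 j) ∧ (∀ J, 0 ≤ X J) ∧
    dotp (D.p m w) (x1 + x2) + dotp (D.PP m w) X ≤ yhat ∧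
    U.u (Sum.inl m) (F.q1 m, D.Q m) ≤ U.u (Sum.inl m) (x1, X) ∧
    U.u (Sum.inr w) (F.q2 (σ.symm w), D.Q (σ.symm w)) ≤ U.u (Sum.inr w) (x2, X)

/-- The pair `(m,w)` is blocking at disposable income `yhat`: weakly blocking with at
least one of the two utility inequalities strict. -/
def Block {n N : ℕ} {M W : Type} (σ : M ≃ W) (D : Dataset n N M W) (F : Spec D)
    (U : UtilProfile n N M W) (m : M) (w : W) (yhat : ℝ) : Prop :=
  ∃ (x1 x2 : Fin n → ℝ) (X : Fin N → ℝ),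
    (∀ j, 0 ≤ x1 j) ∧ (∀ j, 0 ≤ x2 j) ∧ (∀ J, 0 ≤ X J) ∧
    dotp (D.p m w) (x1 + x2) + dotp (D.PP m w) X ≤ yhat ∧
    U.u (Sum.inl m) (F.q1 m, D.Q m) ≤ U.u (Sum.inl m) (x1, X) ∧
    U.u (Sum.inr w) (F.q2 (σ.symm w), D.Q (σ.symm w)) ≤ U.u (Sum.inr w) (x2, X) ∧
    (U.u (Sum.inl m) (F.q1 m, D.Q m) < U.u (Sum.inl m) (x1, X) ∨
     U.u (Sum.inr w) (F.q2 (σ.symm w), D.Q (σ.symm w)) < U.u (Sum.inr w) (x2, X))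

/-- A coalition: a nonempty set `S` of individuals together with a rematching `τ`
that is a bijection between the men of `S` and the women of `S`. -/
structure Coalition (M W : Type) where
  S : Set (M ⊕ W)
  nonempty : S.Nonempty
  τ : M → W
  bij : Set.BijOn τ {m | Sum.inl m ∈ S} {w | Sum.inr w ∈ S}

/-- A coalition is permissible if every member whose observed couple is committed has
their spouse in the coalition. -/
def Coalition.PermissibleC {M W : Type} (C : Coalition M W) (σ : M ≃ W) (V : Set M) :
    Prop :=
  (∀ m, Sum.inl m ∈ C.S → m ∈ V → Sum.inr (σ m) ∈ C.S) ∧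
  (∀ w, Sum.inr w ∈ C.S → σ.symm w ∈ V → Sum.inl (σ.symm w) ∈ C.S)

/-- A coalition blocks without transfers. -/
def Coalition.BlocksNT {n N : ℕ} {M W : Type} (C : Coalition M W) (σ : M ≃ W)
    (D : Dataset n N M W) (F : Spec D) (U : UtilProfile n N M W) : Prop :=
  (∀ m, Sum.inl m ∈ C.S → WeakBlock σ D F U m (C.τ m) (D.y m (C.τ m))) ∧
  (∃ m, Sum.inl m ∈ C.S ∧ Block σ D F U m (C.τ m) (D.y m (C.τ m)))

/-- A coalition blocks with transfers. -/
def Coalition.BlocksT {n N : ℕ} {M W : Type} (C : Coalition M W) (σ : M ≃ W)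
    (D : Dataset n N M W) (F : Spec D) (U : UtilProfile n N M W) : Prop :=
  ∃ t : M → ℝ,
    (∀ m, (Sum.inl m ∉ C.S ∨ Sum.inr (σ m) ∉ C.S) → t m = 0) ∧
    (∀ m, Sum.inl m ∈ C.S →
      WeakBlock σ D F U m (C.τ m) (D.y m (C.τ m) - t m + t (σ.symm (C.τ m)))) ∧
    (∃ m, Sum.inl m ∈ C.S ∧
      Block σ D F U m (C.τ m) (D.y m (C.τ m) - t m + t (σ.symm (C.τ m))))

/-- Rationalizability with core without transfers. -/
def RationalizableNT {n N : ℕ} {M W : Type} (σ : M ≃ W) (V : Set M)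
    (D : Dataset n N M W) : Prop :=
  ∃ (U : UtilProfile n N M W) (F : Spec D),
    ∀ C : Coalition M W, C.PermissibleC σ V → ¬ C.BlocksNT σ D F U

/-- Rationalizability with core with transfers. -/
def RationalizableT {n N : ℕ} {M W : Type} (σ : M ≃ W) (V : Set M)
    (D : Dataset n N M W) : Prop :=
  ∃ (U : UtilProfile n N M W) (F : Spec D),
    ∀ C : Coalition M W, C.PermissibleC σ V → ¬ C.BlocksT σ D F U

/-- with common prices, additive incomes, budget exhaustion, and a
constant Lindahl split, the total edge weight along any cycle of remarriages is zero,
so no dataset can contain a blocking cycle. -/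
theorem no_blocking_cycle_without_variation
    {n N : ℕ} (hn : 1 ≤ n) (hN : 1 ≤ N)
    {M W : Type} [Fintype M] [Fintype W] [Nonempty M] [Nonempty W]
    (σ : M ≃ W) (D : Dataset n N M W)
    (p : Fin n → ℝ) (P : Fin N → ℝ) (y : M ⊕ W → ℝ)
    (hy_pos : ∀ i, 0 < y i)
    (hp : ∀ m w, D.p m w = p)
    (hP : ∀ m w, D.PP m w = P)
    (hy : ∀ m w, D.y m w = y (Sum.inl m) + y (Sum.inr w))
    (hbudget : ∀ m, dotp p (D.q m) + dotp P (D.Q m) = y (Sum.inl m) + y (Sum.inr (σ m)))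
    (F : Spec D) (Pbar : Fin N → ℝ)
    (hPbar_pos : ∀ J, 0 < Pbar J) (hPbar_lt : ∀ J, Pbar J < P J)
    (hP1 : ∀ m w, F.P1 m w = Pbar)
    (len : ℕ) (ms : ℕ → M) (hpath : IsRePath len ms)
    (hcycle : ms 0 = ms (len - 1)) :
    (∑ j ∈ Finset.range (len - 1), edge σ D F (ms j) (σ (ms (j + 1)))) = 0 := by
  have hP2 : ∀ m w J, F.P2 m w J = P J - Pbar J := by
    intro m w J
    have h := congrFun (F.P_add m w) J
    rw [hP1, hP] at h
    simp only [Pi.add_apply] at h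
    linarith
  set f : M → ℝ := fun m => dotp p (F.q1 m) + dotp Pbar (D.Q m) - y (Sum.inl m) with hf
  have hedge : ∀ m m' : M, edge σ D F m (σ m') = f m - f m' := by
    intro m m'
    have hq : dotp p (F.q1 m') + dotp p (F.q2 m') = dotp p (D.q m') := by
      rw [← F.q_add m']
      simp [dotp, mul_add, Finset.sum_add_distrib]
    have hsplit : dotp Pbar (D.Q m') + dotp (F.P2 m (σ m')) (D.Q m') = dotp P (D.Q m') := by
      simp only [dotp]
      rw [← Finset.sum_add_distrib]
      apply Finset.sum_congr rfl
      intro J _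
      rw [hP2]; ring
    have hb := hbudget m'
    have h1 : dotp p (F.q1 m + F.q2 m') = dotp p (F.q1 m) + dotp p (F.q2 m') := by
      simp [dotp, mul_add, Finset.sum_add_distrib]
    simp only [edge, Equiv.symm_apply_apply, hp, hy, hP1, h1, hf]
    linarith [hq, hsplit, hb]
  have : (∑ j ∈ Finset.range (len - 1), edge σ D F (ms j) (σ (ms (j + 1))))
      = ∑ j ∈ Finset.range (len - 1), (f (ms j) - f (ms (j + 1))) := by
    apply Finset.sum_congr rfl
    intro j _; exact hedge _ _
  rw [this, Finset.sum_range_sub' (fun j => f (ms j)), ← hcycle, sub_self]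
end
end

section
/- Suppose there is p ∈ ℝ^n with strictly positive components such that p_{m,w} = p for every (m,w) ∈ M × W. If some feasible specification of D satisfies path monotonicity, then for every committed man i ∈ V and every alternative pair of shares q̄^1_i, q̄^2_i ∈ ℝ^n with nonnegative components and q̄^1_i + q̄^2_i = q_i, there exists a feasible specification of D assigning the shares (q̄^1_i, q̄^2_i) to the observed couple (i, σ(i)) that also satisfies path monotonicity. In particular, when private-good prices do not vary across potential matches, the stability conditions with transfers place no restriction on the intrahousehold private consumption shares of committed couples. -/
open Finset

noncomputable section

lemma dotp_addr {k : ℕ} (x a b : Fin k → ℝ) : dotp x (a + b) = dotp x a + dotp x b := by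
  simp [dotp, mul_add, Finset.sum_add_distrib]

lemma pathMonotone_of_reshare {n N : ℕ} {M W : Type} (σ : M ≃ W) (V : Set M)
    (D : Dataset n N M W) (F F' : Spec D) (p : Fin n → ℝ) (hp : ∀ m w, D.p m w = p)
    (i : M) (hi : i ∈ V)
    (hP1 : F'.P1 = F.P1) (hP2 : F'.P2 = F.P2)
    (hq1 : ∀ m, m ≠ i → F'.q1 m = F.q1 m) (hq2 : ∀ m, m ≠ i → F'.q2 m = F.q2 m)
    (hq : F'.q1 i + F'.q2 i = F.q1 i + F.q2 i)
    (hF : PathMonotone σ V D F) : PathMonotone σ V D F' := by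
  classical
  set c : ℝ := dotp p (F'.q1 i) - dotp p (F.q1 i) with hc
  have hq2c : dotp p (F'.q2 i) = dotp p (F.q2 i) - c := by
    have h1 : dotp p (F'.q1 i) + dotp p (F'.q2 i) = dotp p (F.q1 i) + dotp p (F.q2 i) := by
      rw [← dotp_addr, ← dotp_addr, hq]
    linarith
  have hedge : ∀ m w, edge σ D F' m w =
      edge σ D F m w + ((if m = i then c else 0) - (if σ.symm w = i then c else 0)) := by
    intro m w
    unfold edge
    rw [hp m w, dotp_addr, dotp_addr, hP1, hP2]
    have h1 : dotp p (F'.q1 m) = dotp p (F.q1 m) + (if m = i then c else 0) := by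
      by_cases h : m = i
      · simp [h, hc]
      · simp [h, hq1 m h]
    have h2 : dotp p (F'.q2 (σ.symm w)) =
        dotp p (F.q2 (σ.symm w)) - (if σ.symm w = i then c else 0) := by
      by_cases h : σ.symm w = i
      · rw [h, hq2c]; simp [h]
      · simp [h, hq2 _ h]
    rw [h1, h2]; ring
  intro hbad
  obtain ⟨len, ms, hpath, hperm, hsum⟩ := hbad
  apply hF
  refine ⟨len, ms, hpath, hperm, ?_⟩
  have key : ∑ j ∈ Finset.range (len - 1), edge σ D F' (ms j) (σ (ms (j + 1))) =
      (∑ j ∈ Finset.range (len - 1), edge σ D F (ms j) (σ (ms (j + 1)))) +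
      ((if ms 0 = i then c else 0) - (if ms (len - 1) = i then c else 0)) := by
    have htel := Finset.sum_range_sub' (fun j => if ms j = i then c else 0) (len - 1)
    calc ∑ j ∈ Finset.range (len - 1), edge σ D F' (ms j) (σ (ms (j + 1)))
        = ∑ j ∈ Finset.range (len - 1),
          (edge σ D F (ms j) (σ (ms (j + 1))) +
            ((if ms j = i then c else 0) - (if ms (j + 1) = i then c else 0))) := by
          refine Finset.sum_congr rfl fun j _ => ?_
          rw [hedge]; simp
      _ = _ := by rw [Finset.sum_add_distrib, htel]
  have hzero : (if ms 0 = i then c else 0) = (if ms (len - 1) = i then c else 0) := by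
    rcases hperm with h | ⟨h0, h1⟩
    · rw [h]
    · have e0 : ms 0 ≠ i := fun e => h0 (e ▸ hi)
      have e1 : ms (len - 1) ≠ i := fun e => h1 (e ▸ hi)
      simp [e0, e1]
  rw [key, hzero] at hsum
  linarith

/-- if private-good prices do not vary across potential matches, path
monotonicity places no restriction on the private shares of committed couples. -/
theorem no_identification_of_committed_without_price_variation
    {n N : ℕ} (hn : 1 ≤ n) (hN : 1 ≤ N)
    {M W : Type} [Fintype M] [Fintype W] [Nonempty M] [Nonempty W]
    (σ : M ≃ W) (V : Set M) (D : Dataset n N M W)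
    (p : Fin n → ℝ) (hp : ∀ m w, D.p m w = p)
    (F : Spec D) (hF : PathMonotone σ V D F)
    (i : M) (hi : i ∈ V)
    (qb1 qb2 : Fin n → ℝ) (hqb1 : ∀ j, 0 ≤ qb1 j) (hqb2 : ∀ j, 0 ≤ qb2 j)
    (hqb : qb1 + qb2 = D.q i) :
    ∃ F' : Spec D, F'.q1 i = qb1 ∧ F'.q2 i = qb2 ∧ PathMonotone σ V D F' := by
  classical
  refine ⟨{ q1 := fun m => if m = i then qb1 else F.q1 m
            q2 := fun m => if m = i then qb2 else F.q2 m
            P1 := F.P1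
            P2 := F.P2
            q1_nonneg := fun m j => by by_cases h : m = i <;> simp [h, hqb1, F.q1_nonneg]
            q2_nonneg := fun m j => by by_cases h : m = i <;> simp [h, hqb2, F.q2_nonneg]
            q_add := fun m => by
              by_cases h : m = i
              · simp [h, hqb]
              · simp [h, F.q_add]
            P1_pos := F.P1_pos
            P2_pos := F.P2_pos
            P_add := F.P_add }, by simp, by simp, ?_⟩
  refine pathMonotone_of_reshare σ V D F _ p hp i hi rfl rfl
    (fun m h => by simp [h]) (fun m h => by simp [h]) ?_ hF
  simp [F.q_add, hqb]
end
end

section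
/- If some feasible specification of D has edge weight a_{m,w} ≥ 0 for every potential pair (m,w) ∈ M × W, then there exists a utility profile (continuous, nondecreasing, and concave utility functions for all individuals) such that, relative to this specification, no potential pair (m,w) ∈ M × W is blocking at disposable income y_{m,w}. -/
open Finset

noncomputable section

/-! Give every individual an Afriat-type utility: the minimum, over all potential partners,
of the Lindahl value of the gain over their observed bundle, i.e. for a man `m`
`u (x, X) = min_w (p_{m,w} ⬝ (x - q¹_m) + P¹_{m,w} ⬝ (X - Q_m))`, and symmetrically for women
with the prices `P²`. As a minimum of finitely many nondecreasing affine functions it is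
continuous, nondecreasing and concave, and it vanishes at the observed bundle. If `(m, w)`
blocked with a bundle `(x¹, x², X)`, the `(m, w)`-terms of the two minima would be nonnegative
and one of them positive; since `P¹ + P² = P`, their sum is the cost of the bundle minus
`y_{m,w} + a_{m,w} ≥ y_{m,w}`, contradicting the budget constraint. -/

open Matrix

section FinsetInf

variable {ι E β : Type*} {s : Finset ι}

theorem Monotone.finset_inf'_apply [Preorder E] [SemilatticeInf β] (hs : s.Nonempty)
    {f : ι → E → β} (hf : ∀ i ∈ s, Monotone (f i)) : Monotone fun x => s.inf' hs (f · x) := by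
  simpa only [← Finset.inf'_apply] using
    Finset.inf'_induction hs f (fun _ hg _ hh => hg.inf hh) hf

theorem ConcaveOn.finset_inf'_apply {𝕜 : Type*} [Semiring 𝕜] [PartialOrder 𝕜] [AddCommMonoid E]
    [LinearOrder β] [AddCommMonoid β] [IsOrderedAddMonoid β] [SMul 𝕜 E] [Module 𝕜 β]
    [PosSMulStrictMono 𝕜 β] {t : Set E} (hs : s.Nonempty) {f : ι → E → β}
    (hf : ∀ i ∈ s, ConcaveOn 𝕜 t (f i)) : ConcaveOn 𝕜 t fun x => s.inf' hs (f · x) := by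
  simpa only [← Finset.inf'_apply] using
    Finset.inf'_induction hs f (fun _ hg _ hh => hg.inf hh) hf

end FinsetInf

section AfriatUtility

variable {ι E : Type*} [Fintype ι] [Nonempty ι] [AddCommGroup E] [Module ℝ E]

def afriatUtility (c : ι → E →ₗ[ℝ] ℝ) (z₀ z : E) : ℝ :=
  univ.inf' univ_nonempty fun k => c k (z - z₀)

variable (c : ι → E →ₗ[ℝ] ℝ) (z₀ : E)

@[simp]
theorem afriatUtility_self : afriatUtility c z₀ z₀ = 0 := by
  simp [afriatUtility]

theorem afriatUtility_le (z : E) (k : ι) : afriatUtility c z₀ z ≤ c k (z - z₀) :=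
  Finset.inf'_le _ (mem_univ k)

theorem concaveOn_afriatUtility {s : Set E} (hs : Convex ℝ s) :
    ConcaveOn ℝ s (afriatUtility c z₀) :=
  ConcaveOn.finset_inf'_apply _ fun k _ => by
    have h : (fun z => c k (z - z₀)) = ⇑(c k) + fun _ : E => -c k z₀ := by
      ext z
      simp [sub_eq_add_neg]
    exact h ▸ ((c k).concaveOn hs).add_const _

theorem continuous_afriatUtility [TopologicalSpace E] [ContinuousSub E]
    (hc : ∀ k, Continuous (c k)) : Continuous (afriatUtility c z₀) :=
  Continuous.finset_inf'_apply _ fun k _ => (hc k).comp (continuous_sub_right z₀)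

theorem monotone_afriatUtility [PartialOrder E] [IsOrderedAddMonoid E]
    (hc : ∀ k, Monotone (c k)) : Monotone (afriatUtility c z₀) :=
  Monotone.finset_inf'_apply _ fun k _ _ _ h => hc k (sub_le_sub_right h z₀)

end AfriatUtility

section Lindahl

variable {n N : ℕ}

theorem dotp_eq_dotProduct {k : ℕ} (x y : Fin k → ℝ) : dotp x y = x ⬝ᵥ y := rfl

theorem convex_orthant : Convex ℝ (Orthant n N) :=
  convex_Ici 0

def bundleCost (p : Fin n → ℝ) (P : Fin N → ℝ) : (Fin n → ℝ) × (Fin N → ℝ) →ₗ[ℝ] ℝ :=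
  (dotProductBilin ℝ ℝ p).coprod (dotProductBilin ℝ ℝ P)

@[simp]
theorem bundleCost_apply (p : Fin n → ℝ) (P : Fin N → ℝ) (z : (Fin n → ℝ) × (Fin N → ℝ)) :
    bundleCost p P z = p ⬝ᵥ z.1 + P ⬝ᵥ z.2 :=
  rfl

theorem monotone_bundleCost {p : Fin n → ℝ} {P : Fin N → ℝ} (hp : 0 ≤ p) (hP : 0 ≤ P) :
    Monotone (bundleCost p P) := fun _ _ h =>
  add_le_add (dotProduct_le_dotProduct_of_nonneg_left h.1 hp)
    (dotProduct_le_dotProduct_of_nonneg_left h.2 hP)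

end Lindahl

section AfriatProfile

variable {n N : ℕ} {M W : Type} {σ : M ≃ W} {D : Dataset n N M W} {F : Spec D}

theorem bundleCost_add_bundleCost_eq_sub_edge (m : M) (w : W) (x1 x2 : Fin n → ℝ)
    (X : Fin N → ℝ) :
    bundleCost (D.p m w) (F.P1 m w) ((x1, X) - (F.q1 m, D.Q m)) +
        bundleCost (D.p m w) (F.P2 m w) ((x2, X) - (F.q2 (σ.symm w), D.Q (σ.symm w))) =
      dotp (D.p m w) (x1 + x2) + dotp (D.PP m w) X - D.y m w - edge σ D F m w := by
  simp only [edge, dotp_eq_dotProduct, ← F.P_add, bundleCost_apply, Prod.fst_sub,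
    Prod.snd_sub, dotProduct_sub, dotProduct_add, add_dotProduct]
  ring

variable (σ D F) [Fintype M] [Fintype W] [Nonempty M] [Nonempty W]

def afriatProfile : UtilProfile n N M W where
  u
    | .inl m => afriatUtility (fun w => bundleCost (D.p m w) (F.P1 m w)) (F.q1 m, D.Q m)
    | .inr w => afriatUtility (fun m => bundleCost (D.p m w) (F.P2 m w))
        (F.q2 (σ.symm w), D.Q (σ.symm w))
  cont := by
    rintro (m | w) <;>
      exact (continuous_afriatUtility _ _ fun _ =>
        LinearMap.continuous_of_finiteDimensional _).continuousOn
  mono := by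
    rintro (m | w) <;>
      refine (monotone_afriatUtility _ _ fun k =>
        monotone_bundleCost (fun j => (D.p_pos _ _ j).le) fun J => ?_).monotoneOn _
    exacts [(F.P1_pos m k J).le, (F.P2_pos k w J).le]
  conc := by
    rintro (m | w) <;> exact concaveOn_afriatUtility _ _ convex_orthant

variable {σ D F}

theorem not_block_afriatProfile {m : M} {w : W} (hmw : 0 ≤ edge σ D F m w) :
    ¬ Block σ D F (afriatProfile σ D F) m w (D.y m w) := by
  rintro ⟨x1, x2, X, -, -, -, hbudget, hman, hwoman, hstrict⟩
  simp only [afriatProfile, afriatUtility_self] at hman hwoman hstrict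
  have hman_le := afriatUtility_le (fun w => bundleCost (D.p m w) (F.P1 m w))
    (F.q1 m, D.Q m) (x1, X) w
  have hwoman_le := afriatUtility_le (fun m => bundleCost (D.p m w) (F.P2 m w))
    (F.q2 (σ.symm w), D.Q (σ.symm w)) (x2, X) m
  have hsum := bundleCost_add_bundleCost_eq_sub_edge (σ := σ) (F := F) m w x1 x2 X
  rcases hstrict with h | h <;> linarith

end AfriatProfile

theorem nonneg_edges_imp_no_blocking_pair_general
    {n N : ℕ}
    {M W : Type} [Fintype M] [Fintype W] [Nonempty M] [Nonempty W]
    (σ : M ≃ W) (D : Dataset n N M W) (F : Spec D)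
    (hF : ∀ (m : M) (w : W), 0 ≤ edge σ D F m w) :
    ∃ U : UtilProfile n N M W, ∀ (m : M) (w : W), ¬ Block σ D F U m w (D.y m w) :=
  ⟨afriatProfile σ D F, fun m w => not_block_afriatProfile (hF m w)⟩

/-- if a feasible specification has all edge weights nonnegative, then
there is a utility profile under which no potential pair is blocking. -/
theorem nonneg_edges_imp_no_blocking_pair
    {n N : ℕ} (hn : 1 ≤ n) (hN : 1 ≤ N)
    {M W : Type} [Fintype M] [Fintype W] [Nonempty M] [Nonempty W]
    (σ : M ≃ W) (D : Dataset n N M W) (F : Spec D)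
    (hF : ∀ (m : M) (w : W), 0 ≤ edge σ D F m w) :
    ∃ U : UtilProfile n N M W, ∀ (m : M) (w : W), ¬ Block σ D F U m w (D.y m w) :=
  nonneg_edges_imp_no_blocking_pair_general σ D F hF
end
end

section
/- If some feasible specification of D has edge weight a_{m,w} > 0 for every potential pair (m,w) ∈ M × W, then there exists a utility profile (continuous, nondecreasing, and concave utility functions for all individuals) such that, relative to this specification, no potential pair (m,w) ∈ M × W is even weakly blocking at disposable income y_{m,w}. -/
open Finset

noncomputable section

lemma dotp_add_right {k : ℕ} (c x y : Fin k → ℝ) :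
    dotp c (x + y) = dotp c x + dotp c y := by
  simp [dotp, mul_add, Finset.sum_add_distrib]

lemma dotp_add_left {k : ℕ} (c d x : Fin k → ℝ) :
    dotp (c + d) x = dotp c x + dotp d x := by
  simp [dotp, add_mul, Finset.sum_add_distrib]

lemma dotp_mono {k : ℕ} {c x y : Fin k → ℝ} (hc : ∀ j, 0 ≤ c j) (h : x ≤ y) :
    dotp c x ≤ dotp c y :=
  Finset.sum_le_sum fun j _ => mul_le_mul_of_nonneg_left (h j) (hc j)

lemma dotp_smul_right {k : ℕ} (a : ℝ) (c x : Fin k → ℝ) :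
    dotp c (a • x) = a * dotp c x := by
  simp only [dotp, Finset.mul_sum, Pi.smul_apply, smul_eq_mul]
  exact Finset.sum_congr rfl fun j _ => by ring

lemma orthant_convex (n N : ℕ) : Convex ℝ (Orthant n N) := by
  intro z hz w hw a b ha hb _
  refine ⟨fun j => ?_, fun J => ?_⟩
  · exact add_nonneg (smul_nonneg ha (hz.1 j)) (smul_nonneg hb (hw.1 j))
  · exact add_nonneg (smul_nonneg ha (hz.2 J)) (smul_nonneg hb (hw.2 J))

section Aux
variable {ι : Type} [Fintype ι] [Nonempty ι] {n N : ℕ}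
  (c : ι → Fin n → ℝ) (d : ι → Fin N → ℝ) (e : ι → ℝ)

def affInf : ((Fin n → ℝ) × (Fin N → ℝ)) → ℝ :=
  fun z => Finset.univ.inf' Finset.univ_nonempty
    (fun i => dotp (c i) z.1 + dotp (d i) z.2 + e i)

lemma affInf_cont : ContinuousOn (affInf c d e) (Orthant n N) := by
  apply ContinuousOn.finset_inf'_apply
  intro i _
  apply Continuous.continuousOn
  have h1 : Continuous fun z : (Fin n → ℝ) × (Fin N → ℝ) => dotp (c i) z.1 := by
    unfold dotp
    exact continuous_finset_sum _ fun j _ =>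
      (continuous_const.mul ((continuous_apply j).comp continuous_fst))
  have h2 : Continuous fun z : (Fin n → ℝ) × (Fin N → ℝ) => dotp (d i) z.2 := by
    unfold dotp
    exact continuous_finset_sum _ fun j _ =>
      (continuous_const.mul ((continuous_apply j).comp continuous_snd))
  exact (h1.add h2).add continuous_const

lemma affInf_mono (hc : ∀ i j, 0 ≤ c i j) (hd : ∀ i J, 0 ≤ d i J) :
    MonotoneOn (affInf c d e) (Orthant n N) := by
  intro z _ w _ hzw
  apply Finset.le_inf'
  intro i _
  calc affInf c d e z ≤ dotp (c i) z.1 + dotp (d i) z.2 + e i :=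
        Finset.inf'_le _ (Finset.mem_univ i)
    _ ≤ dotp (c i) w.1 + dotp (d i) w.2 + e i := by
        gcongr
        · exact dotp_mono (hc i) hzw.1
        · exact dotp_mono (hd i) hzw.2

lemma affInf_conc : ConcaveOn ℝ (Orthant n N) (affInf c d e) := by
  refine ⟨orthant_convex n N, ?_⟩
  intro z _ w _ a b ha hb hab
  apply Finset.le_inf'
  intro i _
  have : dotp (c i) (a • z + b • w).1 + dotp (d i) (a • z + b • w).2 + e i
      = a * (dotp (c i) z.1 + dotp (d i) z.2 + e i)
        + b * (dotp (c i) w.1 + dotp (d i) w.2 + e i) := by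
    simp only [Prod.fst_add, Prod.snd_add, Prod.smul_fst, Prod.smul_snd,
      dotp_add_right, dotp_smul_right]
    have hb' : b = 1 - a := by linarith
    subst hb'; ring
  rw [this]
  simp only [smul_eq_mul]
  gcongr ?x + ?y
  · exact mul_le_mul_of_nonneg_left (Finset.inf'_le _ (Finset.mem_univ i)) ha
  · exact mul_le_mul_of_nonneg_left (Finset.inf'_le _ (Finset.mem_univ i)) hb

lemma affInf_at (z : (Fin n → ℝ) × (Fin N → ℝ)) (i : ι) :
    affInf c d e z ≤ dotp (c i) z.1 + dotp (d i) z.2 + e i :=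
  Finset.inf'_le _ (Finset.mem_univ i)

lemma affInf_const_zero (z : (Fin n → ℝ) × (Fin N → ℝ))
    (h : ∀ i, dotp (c i) z.1 + dotp (d i) z.2 + e i = 0) :
    affInf c d e z = 0 := by
  unfold affInf
  rw [show (fun i => dotp (c i) z.1 + dotp (d i) z.2 + e i) = fun _ => (0:ℝ) from
    funext h]
  simp

end Aux

/-- if a feasible specification has all edge weights strictly positive,
then there is a utility profile under which no potential pair is even weakly blocking. -/
theorem pos_edges_imp_no_weakly_blocking_pair
    {n N : ℕ} (hn : 1 ≤ n) (hN : 1 ≤ N)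
    {M W : Type} [Fintype M] [Fintype W] [Nonempty M] [Nonempty W]
    (σ : M ≃ W) (D : Dataset n N M W) (F : Spec D)
    (hF : ∀ (m : M) (w : W), 0 < edge σ D F m w) :
    ∃ U : UtilProfile n N M W, ∀ (m : M) (w : W), ¬ WeakBlock σ D F U m w (D.y m w) := by
  classical
  refine ⟨⟨Sum.elim
      (fun m => affInf (fun w => D.p m w) (fun w => F.P1 m w)
        (fun w => -(dotp (D.p m w) (F.q1 m) + dotp (F.P1 m w) (D.Q m))))
      (fun w => affInf (fun m => D.p m w) (fun m => F.P2 m w)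
        (fun m => -(dotp (D.p m w) (F.q2 (σ.symm w)) + dotp (F.P2 m w) (D.Q (σ.symm w))))),
    ?_, ?_, ?_⟩, ?_⟩
  · rintro (m | w) <;> exact affInf_cont _ _ _
  · rintro (m | w)
    · exact affInf_mono _ _ _ (fun w j => (D.p_pos m w j).le) (fun w J => (F.P1_pos m w J).le)
    · exact affInf_mono _ _ _ (fun m j => (D.p_pos m w j).le) (fun m J => (F.P2_pos m w J).le)
  · rintro (m | w) <;> exact affInf_conc _ _ _
  · intro m w hWB
    obtain ⟨x1, x2, X, hx1, hx2, hX, hbud, hm, hw⟩ := hWB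
    simp only [UtilProfile.u, Sum.elim_inl, Sum.elim_inr] at hm hw
    have hm0 : affInf (fun w => D.p m w) (fun w => F.P1 m w)
        (fun w => -(dotp (D.p m w) (F.q1 m) + dotp (F.P1 m w) (D.Q m)))
        (F.q1 m, D.Q m) = 0 :=
      affInf_const_zero _ _ _ _ (fun i => by ring)
    have hw0 : affInf (fun m => D.p m w) (fun m => F.P2 m w)
        (fun m => -(dotp (D.p m w) (F.q2 (σ.symm w)) + dotp (F.P2 m w) (D.Q (σ.symm w))))
        (F.q2 (σ.symm w), D.Q (σ.symm w)) = 0 :=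
      affInf_const_zero _ _ _ _ (fun i => by ring)
    have h1 : (0:ℝ) ≤ dotp (D.p m w) x1 + dotp (F.P1 m w) X
        + -(dotp (D.p m w) (F.q1 m) + dotp (F.P1 m w) (D.Q m)) := by
      have := affInf_at (fun w => D.p m w) (fun w => F.P1 m w)
        (fun w => -(dotp (D.p m w) (F.q1 m) + dotp (F.P1 m w) (D.Q m))) (x1, X) w
      rw [hm0] at hm
      exact le_trans hm this
    have h2 : (0:ℝ) ≤ dotp (D.p m w) x2 + dotp (F.P2 m w) X
        + -(dotp (D.p m w) (F.q2 (σ.symm w)) + dotp (F.P2 m w) (D.Q (σ.symm w))) := by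
      have := affInf_at (fun m => D.p m w) (fun m => F.P2 m w)
        (fun m => -(dotp (D.p m w) (F.q2 (σ.symm w)) + dotp (F.P2 m w) (D.Q (σ.symm w))))
        (x2, X) m
      rw [hw0] at hw
      exact le_trans hw this
    have hedge := hF m w
    unfold edge at hedge
    rw [dotp_add_right] at hedge
    rw [dotp_add_right, ← F.P_add m w, dotp_add_left] at hbud
    linarith
end
end

section
/- Let (S, σ̂) be a permissible coalition. Then there exist n ≥ 2 and a path of remarriages m₁, …, m_n with m₁, …, m_{n−1} ∈ S ∩ M such that σ̂(m_j) = σ(m_{j+1}) for every j = 1, …, n−1, and either m₁ = m_n or both m₁ ∉ V and m_n ∉ V. -/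
open Finset

noncomputable section

/-!
Let `next m := σ⁻¹ (σ̂ m)` be the man whose observed wife becomes `m`'s partner in the
coalition; it is injective on the men of `S`. Follow `m, next m, next² m, …` until the orbit
returns to its start (a cycle) or leaves `S` (a path). In the second case, start at a man of `S`
whose observed wife is not in `S`; if there is none, `next` maps the men of `S` into themselves
by counting, and the orbit can only close up. Permissibility then makes both ends of a path
uncommitted: the first man is in `S` but his observed wife is not, the last man is not in `S`
but his observed wife is.
-/
open Set Function

section Iterate

variable {α : Type} {g : α → α} {A : Set α} {x : α}

theorem Set.InjOn.mapsTo_of_subset_image [Finite α] (hg : InjOn g A) (h : A ⊆ g '' A) :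
    MapsTo g A A := by
  have himage : g '' A = A := (eq_of_subset_of_ncard_le h hg.ncard_image.le).symm
  exact fun _ ha => himage.subset (mem_image_of_mem g ha)

theorem Set.InjOn.iterate_sub_apply_eq_self (hg : InjOn g A) :
    ∀ {i j : ℕ}, i ≤ j → (∀ k < j, g^[k] x ∈ A) → g^[i] x = g^[j] x →
      g^[j - i] x = x
  | 0, _, _, _, h => by simpa using h.symm
  | i + 1, j + 1, hij, hA, h => by
    rw [iterate_succ_apply', iterate_succ_apply'] at h
    simpa using hg.iterate_sub_apply_eq_self (by omega) (fun k hk => hA k (by omega))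
      (hg (hA i (by omega)) (hA j (by omega)) h)
  | _ + 1, 0, hij, _, _ => absurd hij (by omega)

theorem Set.InjOn.exists_first_exit_or_return [Finite α] (hg : InjOn g A) (hx : x ∈ A) :
    ∃ t, 0 < t ∧ (∀ k < t, g^[k] x ∈ A) ∧ (∀ k, 0 < k → k < t → g^[k] x ≠ x) ∧
      (g^[t] x ∉ A ∨ g^[t] x = x) := by
  classical
  have hP : ∃ t, 0 < t ∧ (g^[t] x ∉ A ∨ g^[t] x = x) := by
    obtain ⟨i, j, hne, heq⟩ := Finite.exists_ne_map_eq_of_infinite fun n : ℕ => g^[n] x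
    wlog hij : i < j generalizing i j
    · exact this j i hne.symm heq.symm (by omega)
    by_cases hA : ∀ k < j, g^[k] x ∈ A
    · exact ⟨j - i, by omega, Or.inr (hg.iterate_sub_apply_eq_self hij.le hA heq)⟩
    · push Not at hA
      obtain ⟨k, -, hk⟩ := hA
      exact ⟨k, Nat.pos_of_ne_zero (by rintro rfl; exact hk hx), Or.inl hk⟩
  refine ⟨Nat.find hP, (Nat.find_spec hP).1, fun k hk => ?_,
    fun k hk0 hk hret => Nat.find_min hP hk ⟨hk0, Or.inr hret⟩, (Nat.find_spec hP).2⟩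
  rcases Nat.eq_zero_or_pos k with rfl | hk0
  · exact hx
  · by_contra hkA
    exact Nat.find_min hP hk ⟨hk0, Or.inl hkA⟩

theorem isRePath_iterate {t : ℕ} (hg : InjOn g A) (ht : 0 < t) (hA : ∀ k < t, g^[k] x ∈ A)
    (hret : ∀ k, 0 < k → k < t → g^[k] x ≠ x) :
    IsRePath (t + 1) fun n => g^[n] x := by
  have hlt : ∀ i j, i < j → j ≤ t → g^[i] x = g^[j] x → i = 0 ∧ j = t := by
    intro i j hij hjt h
    have hper := hg.iterate_sub_apply_eq_self hij.le (fun k hk => hA k (by omega)) h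
    have : ¬ j - i < t := fun hshort => hret (j - i) (by omega) hshort hper
    omega
  have hne : ∀ i j, i ≤ t → j ≤ t → g^[i] x = g^[j] x →
      i = j ∨ (i = 0 ∧ j = t) ∨ (j = 0 ∧ i = t) := by
    intro i j hi hj h
    rcases lt_trichotomy i j with hij | hij | hij
    · exact Or.inr (Or.inl (hlt i j hij hj h))
    · exact Or.inl hij
    · exact Or.inr (Or.inr (hlt j i hij hi h.symm))
  refine ⟨by omega, fun i j hi hj h => ?_, fun i j _ hi _ hj h => ?_⟩ <;>
    rcases hne i j (by omega) (by omega) h with h' | h' | h' <;> omega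

end Iterate

namespace Coalition

variable {M W : Type} (C : Coalition M W) (σ : M ≃ W)

def men : Set M := {m | Sum.inl m ∈ C.S}

def next (m : M) : M := σ.symm (C.τ m)

theorem men_nonempty : C.men.Nonempty := by
  obtain ⟨m | w, hi⟩ := C.nonempty
  · exact ⟨m, hi⟩
  · obtain ⟨m, hm, -⟩ := C.bij.surjOn hi
    exact ⟨m, hm⟩

theorem apply_next (m : M) : σ (C.next σ m) = C.τ m := by
  simp [next]

theorem injOn_next : InjOn (C.next σ) C.men :=
  fun _ ha _ hb hab => C.bij.injOn ha hb (σ.symm.injective hab)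

theorem inr_mem_iff_mem_image_next {m : M} :
    Sum.inr (σ m) ∈ C.S ↔ m ∈ C.next σ '' C.men := by
  constructor
  · intro hm
    obtain ⟨a, ha, hτ⟩ := C.bij.surjOn hm
    exact ⟨a, ha, by simp [next, hτ]⟩
  · rintro ⟨a, ha, rfl⟩
    rw [apply_next]
    exact C.bij.mapsTo ha

variable {C σ} {V : Set M}

theorem PermissibleC.notMem_of_inl_mem_of_inr_notMem (hC : C.PermissibleC σ V) {m : M}
    (hm : Sum.inl m ∈ C.S) (hσm : Sum.inr (σ m) ∉ C.S) : m ∉ V :=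
  fun hV => hσm (hC.1 m hm hV)

theorem PermissibleC.notMem_of_inr_mem_of_inl_notMem (hC : C.PermissibleC σ V) {m : M}
    (hσm : Sum.inr (σ m) ∈ C.S) (hm : Sum.inl m ∉ C.S) : m ∉ V :=
  fun hV => hm (by simpa using hC.2 (σ m) hσm (by simpa using hV))

end Coalition

theorem permissible_coalition_contains_path_of_remarriages_general
    {M W : Type} [Fintype M]
    (σ : M ≃ W) (V : Set M) (C : Coalition M W) (hC : C.PermissibleC σ V) :
    ∃ (len : ℕ) (ms : ℕ → M), IsRePath len ms ∧
      (∀ i, i < len - 1 → Sum.inl (ms i) ∈ C.S) ∧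
      (∀ i, i < len - 1 → C.τ (ms i) = σ (ms (i + 1))) ∧
      (ms 0 = ms (len - 1) ∨ (ms 0 ∉ V ∧ ms (len - 1) ∉ V)) := by
  have hg := C.injOn_next σ
  obtain ⟨x, hxS, hstart⟩ : ∃ x ∈ C.men,
      x ∉ C.next σ '' C.men ∨ MapsTo (C.next σ) C.men C.men := by
    by_cases h : C.men ⊆ C.next σ '' C.men
    · exact ⟨_, C.men_nonempty.some_mem, Or.inr (hg.mapsTo_of_subset_image h)⟩
    · obtain ⟨x, hxS, hx⟩ := not_subset.1 h
      exact ⟨x, hxS, Or.inl hx⟩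
  obtain ⟨t, ht, hS, hret, hend⟩ := hg.exists_first_exit_or_return hxS
  refine ⟨t + 1, fun n => (C.next σ)^[n] x, isRePath_iterate hg ht hS hret,
    fun i hi => hS i (by omega), fun i _ => by simp only [iterate_succ_apply', C.apply_next], ?_⟩
  simp only [add_tsub_cancel_right, iterate_zero, id_eq]
  rcases hend with hout | hcycle
  · refine Or.inr ⟨?_, hC.notMem_of_inr_mem_of_inl_notMem ?_ hout⟩
    · rcases hstart with hx | hmaps
      · exact hC.notMem_of_inl_mem_of_inr_notMem hxS ((C.inr_mem_iff_mem_image_next σ).not.2 hx)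
      · exact absurd (hmaps.iterate t hxS) hout
    · obtain ⟨s, rfl⟩ : ∃ s, t = s + 1 := ⟨t - 1, by omega⟩
      rw [iterate_succ_apply', C.inr_mem_iff_mem_image_next σ]
      exact mem_image_of_mem _ (hS s (by omega))
  · exact Or.inl hcycle.symm

/-- every permissible coalition contains a path of remarriages
whose rematched pairs `(m_j, σ̂(m_j))` agree with the coalition's rematching, and
which is either a cycle or has both endpoints non-committed. -/
theorem permissible_coalition_contains_path_of_remarriages
    {M W : Type} [Fintype M] [Fintype W] [Nonempty M] [Nonempty W]
    (σ : M ≃ W) (V : Set M) (C : Coalition M W) (hC : C.PermissibleC σ V) :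
    ∃ (len : ℕ) (ms : ℕ → M), IsRePath len ms ∧
      (∀ i, i < len - 1 → Sum.inl (ms i) ∈ C.S) ∧
      (∀ i, i < len - 1 → C.τ (ms i) = σ (ms (i + 1))) ∧
      (ms 0 = ms (len - 1) ∨ (ms 0 ∉ V ∧ ms (len - 1) ∉ V)) :=
  permissible_coalition_contains_path_of_remarriages_general σ V C hC
end
end
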